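/- Fix an integer n ≥ 2, parameters q_1, …, q_n > 0 and α_1 ≥ α_2 ≥ … ≥ α_{n−1} > α_n > 0, a constant w_n > 0, set Λ = ((Σ_{l=1}^{n} 1/q_l) − 1) / (Σ_{l=1}^{n} 1/(α_l q_l)), and assume α_n · Σ_{l=1}^{n} 1/(α_l q_l) > (Σ_{l=1}^{n} 1/q_l) − 1. Then the subsystem has a unique internal fixed point (w_1*, …, w_{n−1}*, x_1*, …, x_n*), and its coordinates are given by x_i* = 1 − Λ/α_i for 1 ≤ i ≤ n, and (w_1*, …, w_{n−1}*)ᵀ = w_n · R^{−1} (x_1*, …, x_{n−1}*)ᵀ, where R is the invertible (n−1)×(n−1) matrix with diagonal entries q_j − x_j* and off-diagonal entries −x_j* in row j. -/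

import Mathlib

/-!
At an internal fixed point every `wⱼ` is positive, so the first equations force `xⱼ = 1 - Λ/αⱼ`,
which is positive because the hypothesis on `αₙ` says `Λ < αₙ ≤ αⱼ`; the choice of `Λ` is exactly
what makes `∑ᵢ xᵢ/qᵢ = 1`. With `W = wₙ + ∑ₗ wₗ` the remaining equations read `wᵢ qᵢ = xᵢ W`, and
for `j < n` they are the linear system `R w = wₙ x` with `R = diag q - x 1ᵀ`. Summing
`wⱼ = xⱼ W / qⱼ` gives `W (1 - σ) = wₙ` with `σ = ∑_{j<n} xⱼ/qⱼ = 1 - xₙ/qₙ < 1`; the same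
computation with `wₙ = 0` shows that `R` has trivial kernel. Hence `w = wₙ R⁻¹ x`,
`W = wₙ qₙ / xₙ > 0` (so every `wⱼ > 0`), and the last equation holds and pins down `xₙ`.
-/

open Finset Matrix

section FixedPointMatrix

variable {ι : Type*} [Fintype ι] [DecidableEq ι] (q x : ι → ℝ)

def fixedPointMatrix : Matrix ι ι ℝ :=
  Matrix.of fun i j => if i = j then q i - x i else -x i

theorem fixedPointMatrix_mulVec (v : ι → ℝ) :
    fixedPointMatrix q x *ᵥ v = fun i => q i * v i - x i * ∑ j, v j := by
  have hR : fixedPointMatrix q x = diagonal q - Matrix.of fun i _ => x i := by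
    ext i j
    by_cases h : i = j <;> simp [fixedPointMatrix, h]
  ext i
  rw [hR, sub_mulVec, Pi.sub_apply, mulVec_diagonal]
  simp [mulVec, dotProduct, mul_sum]

theorem fixedPointMatrix_mulVec_eq_smul_iff (c : ℝ) (v : ι → ℝ) :
    fixedPointMatrix q x *ᵥ v = c • x ↔ ∀ i, v i * q i - x i * (c + ∑ j, v j) = 0 := by
  rw [fixedPointMatrix_mulVec, funext_iff]
  refine forall_congr' fun i => ?_
  simp only [Pi.smul_apply, smul_eq_mul]
  constructor <;> intro h <;> linarith

variable {q x}

theorem add_sum_mul_one_sub_sum_div_eq {c : ℝ} {v : ι → ℝ} (hq : ∀ i, q i ≠ 0)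
    (h : fixedPointMatrix q x *ᵥ v = c • x) :
    (c + ∑ j, v j) * (1 - ∑ i, x i / q i) = c := by
  have hv : ∀ i, v i = x i / q i * (c + ∑ j, v j) := fun i => by
    have := (fixedPointMatrix_mulVec_eq_smul_iff q x c v).1 h i
    field_simp [hq i]
    linarith
  have hsum : ∑ j, v j = (∑ i, x i / q i) * (c + ∑ j, v j) := by
    rw [sum_mul]
    exact sum_congr rfl fun i _ => hv i
  linarith

theorem isUnit_fixedPointMatrix (hq : ∀ i, q i ≠ 0) (hσ : ∑ i, x i / q i ≠ 1) :
    IsUnit (fixedPointMatrix q x) := by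
  rw [isUnit_iff_isUnit_det, isUnit_iff_ne_zero]
  intro hdet
  obtain ⟨v, hv, hRv⟩ := exists_mulVec_eq_zero_iff.2 hdet
  rw [← zero_smul ℝ x] at hRv
  have hsum : ∑ j, v j = 0 := by
    simpa [sub_eq_zero, hσ.symm] using add_sum_mul_one_sub_sum_div_eq hq hRv
  refine hv (funext fun i => ?_)
  simpa [hsum, hq i] using (fixedPointMatrix_mulVec_eq_smul_iff q x 0 v).1 hRv i

theorem pos_of_fixedPointMatrix_mulVec_eq_smul {c : ℝ} {v : ι → ℝ} (hq : ∀ i, 0 < q i)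
    (hx : ∀ i, 0 < x i) (hσ : ∑ i, x i / q i < 1) (hc : 0 < c)
    (h : fixedPointMatrix q x *ᵥ v = c • x) (i : ι) : 0 < v i := by
  have hW : 0 < c + ∑ j, v j := by
    refine pos_of_mul_pos_left (b := 1 - ∑ i, x i / q i) ?_ (by linarith)
    rwa [add_sum_mul_one_sub_sum_div_eq (fun i => (hq i).ne') h]
  have := (fixedPointMatrix_mulVec_eq_smul_iff q x c v).1 h i
  have := mul_pos (hx i) hW
  exact pos_of_mul_pos_left (by linarith) (hq i).le

theorem add_sum_eq_of_fixedPointMatrix_mulVec_eq_smul {c r : ℝ} {v : ι → ℝ} (hq : ∀ i, q i ≠ 0)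
    (hσ : ∑ i, x i / q i = 1 - r) (hr : r ≠ 0) (h : fixedPointMatrix q x *ᵥ v = c • x) :
    c + ∑ j, v j = c / r := by
  have := add_sum_mul_one_sub_sum_div_eq hq h
  rw [hσ, sub_sub_cancel] at this
  rw [eq_div_iff hr, this]

end FixedPointMatrix

section Lambda

variable {ι : Type*} [Fintype ι] [Nonempty ι] {α q : ι → ℝ}

theorem sum_one_div_mul_pos (hα : ∀ i, 0 < α i) (hq : ∀ i, 0 < q i) :
    0 < ∑ i, 1 / (α i * q i) :=
  sum_pos (fun i _ => by have := hα i; have := hq i; positivity) univ_nonempty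

theorem sum_one_sub_div_div_eq_one (hα : ∀ i, 0 < α i) (hq : ∀ i, 0 < q i) :
    ∑ i, (1 - (∑ l, 1 / q l - 1) / (∑ l, 1 / (α l * q l)) / α i) / q i = 1 := by
  have hterm : ∀ i, (1 - (∑ l, 1 / q l - 1) / (∑ l, 1 / (α l * q l)) / α i) / q i =
      1 / q i - (∑ l, 1 / q l - 1) / (∑ l, 1 / (α l * q l)) * (1 / (α i * q i)) := fun i => by
    field_simp [(hα i).ne']
  rw [sum_congr rfl fun i _ => hterm i, sum_sub_distrib, ← mul_sum,
    div_mul_cancel₀ _ (sum_one_div_mul_pos hα hq).ne']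
  ring

theorem one_sub_div_div_pos (hα : ∀ i, 0 < α i) (hq : ∀ i, 0 < q i) {k : ι}
    (hk : ∀ i, α k ≤ α i) (hcond : α k * ∑ l, 1 / (α l * q l) > ∑ l, 1 / q l - 1) (i : ι) :
    0 < 1 - (∑ l, 1 / q l - 1) / (∑ l, 1 / (α l * q l)) / α i := by
  have hT := sum_one_div_mul_pos hα hq
  rw [sub_pos, div_lt_one (hα i), div_lt_iff₀ hT]
  exact hcond.trans_le (mul_le_mul_of_nonneg_right (hk i) hT.le)

end Lambda

theorem Fin.sum_univ_eq_sum_castLE_add {n : ℕ} (hn : 1 ≤ n) (f : Fin n → ℝ) :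
    ∑ i, f i = ∑ j : Fin (n - 1), f (Fin.castLE (Nat.sub_le n 1) j) + f ⟨n - 1, by omega⟩ := by
  obtain ⟨m, rfl⟩ : ∃ m, n = m + 1 := ⟨n - 1, by omega⟩
  exact Fin.sum_univ_castSucc f

theorem Fin.funext_castLE_last {n : ℕ} (hn : 1 ≤ n) {β : Type*} {f g : Fin n → β}
    (h : ∀ j : Fin (n - 1), f (Fin.castLE (Nat.sub_le n 1) j) = g (Fin.castLE (Nat.sub_le n 1) j))
    (hlast : f ⟨n - 1, by omega⟩ = g ⟨n - 1, by omega⟩) : f = g := by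
  obtain ⟨m, rfl⟩ : ∃ m, n = m + 1 := ⟨n - 1, by omega⟩
  funext i
  induction i using Fin.lastCases with
  | last => exact hlast
  | cast j => exact h j

/-- The subsystem (with `wₙ` held constant) has a unique internal fixed point,
given by `x*ᵢ = 1 - Λ/αᵢ` and `(w*₁,…,w*_{n-1})ᵀ = wₙ R⁻¹ (x*₁,…,x*_{n-1})ᵀ`. -/
theorem stmt_4 (n : ℕ) (hn : 2 ≤ n) (q α : Fin n → ℝ)
    (hq : ∀ i, 0 < q i) (hα : ∀ i, 0 < α i)
    (hmono : ∀ i j : Fin n, i ≤ j → α j ≤ α i)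
    (wn : ℝ) (hwn : 0 < wn)
    (Λ : ℝ) (hΛ : Λ = ((∑ l, 1 / q l) - 1) / ∑ l, 1 / (α l * q l))
    (hcond : α ⟨n - 1, by omega⟩ * ∑ l, 1 / (α l * q l) > (∑ l, 1 / q l) - 1)
    (xstar : Fin n → ℝ) (hxstar : ∀ i, xstar i = 1 - Λ / α i)
    (R : Matrix (Fin (n - 1)) (Fin (n - 1)) ℝ)
    (hR : R = Matrix.of fun i j =>
      if i = j then q (Fin.castLE (Nat.sub_le n 1) i) - xstar (Fin.castLE (Nat.sub_le n 1) i)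
      else -xstar (Fin.castLE (Nat.sub_le n 1) i))
    (wstar : Fin (n - 1) → ℝ)
    (hwstar : wstar = wn • (R⁻¹.mulVec fun j => xstar (Fin.castLE (Nat.sub_le n 1) j))) :
    IsUnit R ∧
    ((∀ j, 0 < wstar j) ∧ (∀ i, 0 < xstar i) ∧
      (∀ j : Fin (n - 1), α (Fin.castLE (Nat.sub_le n 1) j) * wstar j *
        (1 - Λ / α (Fin.castLE (Nat.sub_le n 1) j) - xstar (Fin.castLE (Nat.sub_le n 1) j)) = 0) ∧
      (∀ j : Fin (n - 1), wstar j * q (Fin.castLE (Nat.sub_le n 1) j) -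
        xstar (Fin.castLE (Nat.sub_le n 1) j) * (wn + ∑ l, wstar l) = 0) ∧
      wn * q ⟨n - 1, by omega⟩ - xstar ⟨n - 1, by omega⟩ * (wn + ∑ l, wstar l) = 0) ∧
    (∀ (w : Fin (n - 1) → ℝ) (x : Fin n → ℝ),
      (∀ j, 0 < w j) → (∀ i, 0 < x i) →
      (∀ j : Fin (n - 1), α (Fin.castLE (Nat.sub_le n 1) j) * w j *
        (1 - Λ / α (Fin.castLE (Nat.sub_le n 1) j) - x (Fin.castLE (Nat.sub_le n 1) j)) = 0) →
      (∀ j : Fin (n - 1), w j * q (Fin.castLE (Nat.sub_le n 1) j) -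
        x (Fin.castLE (Nat.sub_le n 1) j) * (wn + ∑ l, w l) = 0) →
      wn * q ⟨n - 1, by omega⟩ - x ⟨n - 1, by omega⟩ * (wn + ∑ l, w l) = 0 →
      w = wstar ∧ x = xstar) := by
  set last : Fin n := ⟨n - 1, by omega⟩
  set x' : Fin (n - 1) → ℝ := fun j => xstar (Fin.castLE (Nat.sub_le n 1) j)
  set q' : Fin (n - 1) → ℝ := fun j => q (Fin.castLE (Nat.sub_le n 1) j)
  have : Nonempty (Fin n) := ⟨last⟩
  have hαlast : ∀ i, α last ≤ α i := fun i =>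
    hmono i last (Fin.le_def.2 (Nat.le_sub_one_of_lt i.isLt))
  have hxpos : ∀ i, 0 < xstar i := fun i => by
    rw [hxstar, hΛ]
    exact one_sub_div_div_pos hα hq hαlast hcond i
  have hσ : ∑ j, x' j / q' j = 1 - xstar last / q last := by
    have hsum : ∑ i, xstar i / q i = 1 := by
      simp_rw [hxstar, hΛ]
      exact sum_one_sub_div_div_eq_one hα hq
    rw [Fin.sum_univ_eq_sum_castLE_add (by omega)] at hsum
    linarith
  have hr : 0 < xstar last / q last := div_pos (hxpos last) (hq last)
  replace hR : R = fixedPointMatrix q' x' := hR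
  subst hR
  have hRunit : IsUnit (fixedPointMatrix q' x') :=
    isUnit_fixedPointMatrix (fun j => (hq _).ne') (by linarith)
  have hRwstar : fixedPointMatrix q' x' *ᵥ wstar = wn • x' := by
    rw [hwstar, mulVec_smul, mulVec_mulVec,
      mul_nonsing_inv _ ((isUnit_iff_isUnit_det _).1 hRunit), one_mulVec]
  have hW := add_sum_eq_of_fixedPointMatrix_mulVec_eq_smul (fun j => (hq _).ne') hσ hr.ne' hRwstar
  have hWpos : 0 < wn + ∑ l, wstar l := hW ▸ div_pos hwn hr
  have hlast : wn * q last - xstar last * (wn + ∑ l, wstar l) = 0 := by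
    rw [hW]
    field_simp [(hxpos last).ne']
    ring
  refine ⟨hRunit, ⟨fun j => ?_, hxpos, fun j => by simp [hxstar],
    (fixedPointMatrix_mulVec_eq_smul_iff q' x' wn wstar).1 hRwstar, hlast⟩, ?_⟩
  · exact pos_of_fixedPointMatrix_mulVec_eq_smul (fun j => hq _) (fun j => hxpos _)
      (by linarith) hwn hRwstar j
  intro w x hw _ h1 h2 h3
  have hxj : ∀ j : Fin (n - 1), x (Fin.castLE (Nat.sub_le n 1) j) = x' j := fun j => by
    have := (mul_eq_zero.1 (h1 j)).resolve_left (mul_pos (hα _) (hw j)).ne'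
    simp only [x', hxstar]
    linarith
  have hRw : fixedPointMatrix q' x' *ᵥ w = wn • x' :=
    (fixedPointMatrix_mulVec_eq_smul_iff q' x' wn w).2 fun j => by simpa [hxj] using h2 j
  have hweq : w = wstar := mulVec_injective_iff_isUnit.2 hRunit (hRw.trans hRwstar.symm)
  subst w
  exact ⟨rfl, Fin.funext_castLE_last (by omega) hxj (mul_right_cancel₀ hWpos.ne' (by linarith))⟩
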